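/- For α, β > 0 the function γ(t) = e^{-β|t|}[cos(αt) + (β/α)·sin(α|t|)] is twice continuously differentiable at 0, with γ'(0) = 0 and γ''(0) = −(α² + β²). -/

import Mathlib

/-!
Write γ(t) = F(|t|) with F(s) = e^{-βs}(cos αs + (β/α) sin αs), a smooth function.
Then γ'(t) = sign(t) F'(|t|) as soon as F'(0) = 0, and this odd function has derivative
F''(|t|) everywhere (at 0 because F'(|t|)/|t| → F''(0)), so γ is C² with γ''(0) = F''(0).
Derivatives of F stay in the family e^{-bs}(p cos as + q sin as), which makes F'(0) = 0 and
F''(0) = -(α² + β²) visible from the coefficients.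
-/

open Real Filter Asymptotics Topology

section CompAbs

variable {F F' F'' : ℝ → ℝ} {c : ℝ}

theorem HasDerivAt.isLittleO_comp_abs (h : HasDerivAt F c 0) :
    (fun t => F |t| - F 0 - |t| * c) =o[𝓝 0] fun t => t := by
  have habs : Tendsto (|·|) (𝓝 (0 : ℝ)) (𝓝 0) := continuous_abs.tendsto' 0 0 abs_zero
  have hO : (fun t : ℝ => |t| - 0) =O[𝓝 0] fun t => t := isBigO_of_le _ fun t => by simp
  simpa [Function.comp_def] using (h.isLittleO.comp_tendsto habs).trans_isBigO hO

theorem HasDerivAt.comp_abs_zero (h : HasDerivAt F 0 0) : HasDerivAt (fun t => F |t|) 0 0 :=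
  .of_isLittleO <| by simpa using h.isLittleO_comp_abs

theorem HasDerivAt.sign_mul_comp_abs_zero (h : HasDerivAt F c 0) (h0 : F 0 = 0) :
    HasDerivAt (fun t => SignType.sign t * F |t|) c 0 := by
  have hsign : (fun t : ℝ => SignType.sign t * (F |t| - F 0 - |t| * c))
      =O[𝓝 0] fun t => F |t| - F 0 - |t| * c := isBigO_of_le _ fun t => by
    rw [norm_mul]
    refine mul_le_of_le_one_left (norm_nonneg _) ?_
    rcases lt_trichotomy t 0 with h | h | h <;> simp [h]
  refine .of_isLittleO <| (hsign.trans_isLittleO h.isLittleO_comp_abs).congr (fun t => ?_) (by simp)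
  rw [mul_sub, ← mul_assoc, sign_mul_abs]
  simp [h0, mul_comm]

theorem eventually_sign_eq {t : ℝ} (ht : t ≠ 0) :
    ∀ᶠ s in 𝓝 t, SignType.sign s = SignType.sign t :=
  (continuousAt_sign_of_ne_zero ht).eventually_mem (isOpen_discrete {_} |>.mem_nhds rfl)

theorem hasDerivAt_comp_abs (hF : ∀ s, HasDerivAt F (F' s) s) (h0 : F' 0 = 0) (t : ℝ) :
    HasDerivAt (fun t => F |t|) (SignType.sign t * F' |t|) t := by
  rcases eq_or_ne t 0 with rfl | ht
  · simpa using (h0 ▸ hF 0).comp_abs_zero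
  · exact ((hF |t|).comp t (hasDerivAt_abs ht)).congr_deriv (mul_comm _ _)

theorem hasDerivAt_sign_mul_comp_abs (hF : ∀ s, HasDerivAt F (F' s) s) (h0 : F 0 = 0) (t : ℝ) :
    HasDerivAt (fun t => SignType.sign t * F |t|) (F' |t|) t := by
  rcases eq_or_ne t 0 with rfl | ht
  · simpa using (hF 0).sign_mul_comp_abs_zero h0
  · have hsq : (SignType.sign t : ℝ) * SignType.sign t = 1 := by
      rcases ht.lt_or_gt with h | h <;> simp [h]
    have hconst := ((hF |t|).comp t (hasDerivAt_abs ht)).const_mul (SignType.sign t : ℝ)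
    refine (hconst.congr_of_eventuallyEq ?_).congr_deriv
      (by rw [mul_comm (F' _), ← mul_assoc, hsq, one_mul])
    filter_upwards [eventually_sign_eq ht] with s hs
    simp [hs]

theorem deriv_comp_abs (hF : ∀ s, HasDerivAt F (F' s) s) (h0 : F' 0 = 0) :
    deriv (fun t => F |t|) = fun t => SignType.sign t * F' |t| :=
  funext fun t => (hasDerivAt_comp_abs hF h0 t).deriv

theorem deriv_sign_mul_comp_abs (hF : ∀ s, HasDerivAt F (F' s) s) (h0 : F 0 = 0) :
    deriv (fun t => SignType.sign t * F |t|) = fun t => F' |t| :=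
  funext fun t => (hasDerivAt_sign_mul_comp_abs hF h0 t).deriv

theorem contDiff_two_comp_abs (hF : ∀ s, HasDerivAt F (F' s) s)
    (hF' : ∀ s, HasDerivAt F' (F'' s) s) (hF'' : Continuous F'') (h0 : F' 0 = 0) :
    ContDiff ℝ 2 fun t => F |t| := by
  rw [show (2 : WithTop ℕ∞) = 1 + 1 from rfl, contDiff_succ_iff_deriv, deriv_comp_abs hF h0,
    contDiff_one_iff_deriv, deriv_sign_mul_comp_abs hF' h0]
  exact ⟨fun t => (hasDerivAt_comp_abs hF h0 t).differentiableAt, by simp,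
    fun t => (hasDerivAt_sign_mul_comp_abs hF' h0 t).differentiableAt, by fun_prop⟩

end CompAbs

noncomputable def dampedOscillation (a b p q t : ℝ) : ℝ :=
  exp (-b * t) * (p * cos (a * t) + q * sin (a * t))

theorem hasDerivAt_dampedOscillation (a b p q t : ℝ) :
    HasDerivAt (dampedOscillation a b p q)
      (dampedOscillation a b (-b * p + a * q) (-b * q - a * p) t) t := by
  have he := ((hasDerivAt_id t).const_mul (-b)).exp
  have hc := ((hasDerivAt_id t).const_mul a).cos
  have hs := ((hasDerivAt_id t).const_mul a).sin
  exact (he.mul ((hc.const_mul p).add (hs.const_mul q))).congr_deriv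
    (by simp only [dampedOscillation, id, Pi.add_apply]; ring)

theorem continuous_dampedOscillation (a b p q : ℝ) : Continuous (dampedOscillation a b p q) := by
  unfold dampedOscillation
  fun_prop

@[simp]
theorem dampedOscillation_zero (a b p q : ℝ) : dampedOscillation a b p q 0 = p := by
  simp [dampedOscillation]

theorem stmt_3_general (α β : ℝ) (hα : 0 < α) :
    let γ : ℝ → ℝ := fun t =>
      Real.exp (-β * |t|) * (Real.cos (α * t) + (β / α) * Real.sin (α * |t|))
    ContDiffAt ℝ 2 γ 0 ∧ deriv γ 0 = 0 ∧ deriv (deriv γ) 0 = -(α ^ 2 + β ^ 2) := by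
  intro γ
  have hγ : γ = fun t => dampedOscillation α β 1 (β / α) |t| := by
    funext t
    simp only [γ, dampedOscillation, one_mul]
    rw [show α * |t| = |α * t| by rw [abs_mul, abs_of_pos hα], cos_abs]
  have hF := hasDerivAt_dampedOscillation α β 1 (β / α)
  set p := -β * 1 + α * (β / α)
  set q := -β * (β / α) - α * 1
  have hp : p = 0 := by simp only [p]; field_simp; ring
  have hF' := hasDerivAt_dampedOscillation α β p q
  have h0 : dampedOscillation α β p q 0 = 0 := by simp [hp]
  rw [hγ]
  refine ⟨(contDiff_two_comp_abs hF hF' (continuous_dampedOscillation ..) h0).contDiffAt, ?_, ?_⟩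
  · simp [deriv_comp_abs hF h0]
  · simp only [deriv_comp_abs hF h0, deriv_sign_mul_comp_abs hF' h0, abs_zero,
      dampedOscillation_zero, p, q]
    field_simp
    ring

/-- γ(t) = e^{-β|t|}[cos(αt) + (β/α) sin(α|t|)] is C² at 0 with γ'(0)=0 and
γ''(0) = −(α²+β²). -/
theorem stmt_3 (α β : ℝ) (hα : 0 < α) (hβ : 0 < β) :
    let γ : ℝ → ℝ := fun t =>
      Real.exp (-β * |t|) * (Real.cos (α * t) + (β / α) * Real.sin (α * |t|))
    ContDiffAt ℝ 2 γ 0 ∧ deriv γ 0 = 0 ∧ deriv (deriv γ) 0 = -(α ^ 2 + β ^ 2) :=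
  stmt_3_general α β hα
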